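/- Let G₁(t,x) = (4πt)^{-1/2} exp(−x²/(4t)). For all x, z₁, z₂ ∈ ℝ and t, s > 0, setting z̄ = (z₁+z₂)/2, Δz = z₁ − z₂, and M = max(4t, s), one has G₁(t, x − z̄) · G₁(s, Δz) ≤ (M/√(t s)) · G₁(M, x − z₁) · G₁(M, x − z₂). -/
import Mathlib


open Real

/-- Heat kernel `G_ν(t,x) = (4πνt)^{-1/2} exp(−x²/(4t))`. -/
noncomputable def heatKernel (ν t x : ℝ) : ℝ :=
  (Real.sqrt (4 * Real.pi * ν * t))⁻¹ * Real.exp (-x ^ 2 / (4 * t))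

theorem heatKernel_split (x z₁ z₂ t s : ℝ) (ht : 0 < t) (hs : 0 < s) :
    heatKernel 1 t (x - (z₁ + z₂) / 2) * heatKernel 1 s (z₁ - z₂)
      ≤ (max (4 * t) s / Real.sqrt (t * s))
          * heatKernel 1 (max (4 * t) s) (x - z₁)
          * heatKernel 1 (max (4 * t) s) (x - z₂) := by
  have hπ := Real.pi_pos
  set M := max (4 * t) s with hMdef
  have hM : 0 < M := lt_max_of_lt_left (by linarith)
  have h4t : 4 * t ≤ M := le_max_left _ _
  have hsM : s ≤ M := le_max_right _ _
  have hts : 0 < Real.sqrt (t * s) := Real.sqrt_pos.2 (by positivity)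
  unfold heatKernel
  simp only [mul_one]
  have hL : (Real.sqrt (4 * Real.pi * t))⁻¹ * Real.exp (-(x - (z₁ + z₂) / 2) ^ 2 / (4 * t)) *
      ((Real.sqrt (4 * Real.pi * s))⁻¹ * Real.exp (-(z₁ - z₂) ^ 2 / (4 * s)))
      = (4 * Real.pi * Real.sqrt (t * s))⁻¹ *
        Real.exp (-(x - (z₁ + z₂) / 2) ^ 2 / (4 * t) + -(z₁ - z₂) ^ 2 / (4 * s)) := by
    have hre : (Real.sqrt (4 * Real.pi * t))⁻¹ *
        Real.exp (-(x - (z₁ + z₂) / 2) ^ 2 / (4 * t)) *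
        ((Real.sqrt (4 * Real.pi * s))⁻¹ * Real.exp (-(z₁ - z₂) ^ 2 / (4 * s)))
        = (Real.sqrt (4 * Real.pi * t) * Real.sqrt (4 * Real.pi * s))⁻¹ *
          (Real.exp (-(x - (z₁ + z₂) / 2) ^ 2 / (4 * t)) * Real.exp (-(z₁ - z₂) ^ 2 / (4 * s))) := by
      rw [mul_inv]; ring
    rw [hre, Real.exp_add, ← Real.sqrt_mul (by positivity),
      show (4 * Real.pi * t) * (4 * Real.pi * s) = (4 * Real.pi) ^ 2 * (t * s) by ring,
      Real.sqrt_mul (by positivity), Real.sqrt_sq (by positivity)]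
  have key : M / Real.sqrt (t * s) * (Real.sqrt (4 * Real.pi * M))⁻¹ *
      (Real.sqrt (4 * Real.pi * M))⁻¹ = (4 * Real.pi * Real.sqrt (t * s))⁻¹ := by
    rw [mul_assoc, ← mul_inv, Real.mul_self_sqrt (by positivity)]
    field_simp
  have hR : M / Real.sqrt (t * s) * ((Real.sqrt (4 * Real.pi * M))⁻¹ *
        Real.exp (-(x - z₁) ^ 2 / (4 * M))) *
      ((Real.sqrt (4 * Real.pi * M))⁻¹ * Real.exp (-(x - z₂) ^ 2 / (4 * M)))
      = (4 * Real.pi * Real.sqrt (t * s))⁻¹ *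
        Real.exp (-(x - z₁) ^ 2 / (4 * M) + -(x - z₂) ^ 2 / (4 * M)) := by
    rw [Real.exp_add, ← key]; ring
  rw [hL, hR]
  refine mul_le_mul_of_nonneg_left (Real.exp_le_exp.2 ?_) (by positivity)
  have hid : (x - z₁) ^ 2 / (4 * M) + (x - z₂) ^ 2 / (4 * M)
      = (x - (z₁ + z₂) / 2) ^ 2 / (2 * M) + (z₁ - z₂) ^ 2 / (8 * M) := by
    field_simp; ring
  have h1 : (x - (z₁ + z₂) / 2) ^ 2 / (2 * M) ≤ (x - (z₁ + z₂) / 2) ^ 2 / (4 * t) :=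
    div_le_div_of_nonneg_left (sq_nonneg _) (by linarith) (by linarith)
  have h2 : (z₁ - z₂) ^ 2 / (8 * M) ≤ (z₁ - z₂) ^ 2 / (4 * s) :=
    div_le_div_of_nonneg_left (sq_nonneg _) (by linarith) (by linarith)
  simp only [neg_div]
  linarith [hid, h1, h2]
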